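/- arXiv:1909.05105 — 6 statements merged into one kernel-verified Lean document; each statement's English description precedes it below -/
import Mathlib

section
/- Let (α_j) be an increasing sequence of positive real numbers converging to 1 with ∑_j (1 - α_j) < ∞, and let z = (z_j) be a sequence of complex numbers with |z_j| ≤ 1 for all j, such that there exists δ > 0 with |z_j - 1| > δ for all j. Then for each N ∈ ℕ such that 1 - α_j < δ/4 for all j ≥ N, the infinite product ∏_{j=N}^∞ (α_j - z_j)/(1 - α_j z_j) converges to a nonzero complex number. -/
/-!
Each factor `bₐ(z) = (a - z) / (1 - a z)` satisfies `bₐ(z) - 1 = -(1 - a)(1 + z) / (1 - a z)`.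
Since `αⱼ` increases to `1`, `αⱼ ≤ 1`; as `zⱼ` stays at distance `δ` from `1` while
`1 - αⱼ < δ / 4`, the denominators are at least `3δ / 4`, so `‖b_{αⱼ}(zⱼ) - 1‖ ≤ 8 (1 - αⱼ) / (3δ)`
is summable. The factors are nonzero, hence their logarithms are summable and the partial products
converge to the exponential of the sum.
-/

open Filter Finset Topology

theorem exists_tendsto_prod_Icc_ne_zero {f : ℕ → ℂ} {N : ℕ} (hf₀ : ∀ j, N ≤ j → f j ≠ 0)
    (hf : Summable fun j => f j - 1) :
    ∃ L : ℂ, L ≠ 0 ∧ Tendsto (fun M => ∏ j ∈ Icc N M, f j) atTop (𝓝 L) := by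
  set g : ℕ → ℂ := fun k => f (N + k)
  have hg : Summable fun k => g k - 1 := by
    simpa only [g, add_comm N] using (summable_nat_add_iff N).mpr hf
  obtain ⟨s, hs⟩ : Summable fun k => Complex.log (g k) := by
    simpa using Complex.summable_log_one_add_of_summable hg
  have hprod : HasProd g (Complex.exp s) :=
    Complex.hasProd_of_hasSum_log (fun k => hf₀ _ (Nat.le_add_right N k)) hs
  refine ⟨Complex.exp s, Complex.exp_ne_zero s, ?_⟩
  have hlen : Tendsto (fun M => M + 1 - N) atTop atTop :=
    (tendsto_sub_atTop_nat N).comp (tendsto_add_atTop_nat 1)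
  refine (hprod.tendsto_prod_nat.comp hlen).congr fun M => ?_
  rw [Function.comp_apply, ← Ico_add_one_right_eq_Icc, prod_Ico_eq_prod_range]

noncomputable def blaschkeFactor (a : ℝ) (z : ℂ) : ℂ := (a - z) / (1 - a * z)

section BlaschkeFactor

variable {a : ℝ} {z : ℂ}

theorem norm_ofReal_sub_one_of_le_one (ha : a ≤ 1) : ‖(a : ℂ) - 1‖ = 1 - a := by
  rw [← Complex.ofReal_one, ← Complex.ofReal_sub, Complex.norm_real, Real.norm_of_nonpos]
    <;> linarith

theorem norm_sub_one_sub_le_norm_one_sub_mul (ha : a ≤ 1) (hz : ‖z‖ ≤ 1) :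
    ‖z - 1‖ - (1 - a) ≤ ‖1 - a * z‖ := by
  have hmul : ‖((a : ℂ) - 1) * z‖ ≤ 1 - a := by
    rw [norm_mul, norm_ofReal_sub_one_of_le_one ha]
    exact mul_le_of_le_one_right (by linarith) hz
  calc ‖z - 1‖ - (1 - a) ≤ ‖z - 1‖ - ‖((a : ℂ) - 1) * z‖ := by linarith
    _ ≤ ‖z - 1 + ((a : ℂ) - 1) * z‖ := norm_sub_le_norm_add _ _
    _ = ‖1 - a * z‖ := by rw [← norm_neg]; ring_nf

theorem one_sub_mul_ne_zero (ha : a ≤ 1) (hz : ‖z‖ ≤ 1) (hfar : 1 - a < ‖z - 1‖) :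
    1 - (a : ℂ) * z ≠ 0 := by
  rw [← norm_pos_iff]
  linarith [norm_sub_one_sub_le_norm_one_sub_mul ha hz]

theorem blaschkeFactor_ne_zero (ha : a ≤ 1) (hz : ‖z‖ ≤ 1) (hfar : 1 - a < ‖z - 1‖) :
    blaschkeFactor a z ≠ 0 := by
  refine div_ne_zero (fun h => ?_) (one_sub_mul_ne_zero ha hz hfar)
  rw [← sub_eq_zero.mp h, norm_ofReal_sub_one_of_le_one ha] at hfar
  exact hfar.false

theorem norm_blaschkeFactor_sub_one_le (ha : a ≤ 1) (hz : ‖z‖ ≤ 1) (hfar : 1 - a < ‖z - 1‖) :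
    ‖blaschkeFactor a z - 1‖ ≤ 2 * (1 - a) / ‖1 - a * z‖ := by
  have hden := one_sub_mul_ne_zero ha hz hfar
  have hsub : blaschkeFactor a z - 1 = -((1 - a) * (1 + z)) / (1 - a * z) := by
    rw [blaschkeFactor]
    field_simp
    ring
  have hnum : ‖(1 : ℂ) - a‖ = 1 - a := by
    rw [← norm_neg, neg_sub, norm_ofReal_sub_one_of_le_one ha]
  have hplus : ‖(1 : ℂ) + z‖ ≤ 2 := by
    linarith [norm_add_le (1 : ℂ) z, norm_one (α := ℂ)]
  rw [hsub, norm_div, norm_neg, norm_mul, hnum, mul_comm 2]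
  gcongr

end BlaschkeFactor

theorem stmt_0_general (α : ℕ → ℝ) (hmono : StrictMono α)
    (hlim : Tendsto α atTop (𝓝 1)) (hsum : Summable (fun j => 1 - α j))
    (z : ℕ → ℂ) (hz : ∀ j, ‖z j‖ ≤ 1) (δ : ℝ) (hδ : 0 < δ)
    (hzδ : ∀ j, δ < ‖z j - 1‖) (N : ℕ) (hN : ∀ j, N ≤ j → 1 - α j < δ / 4) :
    ∃ L : ℂ, L ≠ 0 ∧
      Tendsto (fun M => ∏ j ∈ Finset.Icc N M, ((α j : ℂ) - z j) / (1 - (α j : ℂ) * z j))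
        atTop (𝓝 L) := by
  have hα : ∀ j, α j ≤ 1 := fun j => hmono.monotone.ge_of_tendsto hlim j
  have hfar : ∀ j, N ≤ j → 1 - α j < ‖z j - 1‖ := fun j hj => by linarith [hN j hj, hzδ j]
  have hbound : ∀ j, N ≤ j → ‖blaschkeFactor (α j) (z j) - 1‖ ≤ 8 / (3 * δ) * (1 - α j) := by
    intro j hj
    have hden : 3 * δ / 4 ≤ ‖1 - (α j : ℂ) * z j‖ := by
      linarith [norm_sub_one_sub_le_norm_one_sub_mul (hα j) (hz j), hN j hj, hzδ j]
    calc ‖blaschkeFactor (α j) (z j) - 1‖ ≤ 2 * (1 - α j) / ‖1 - (α j : ℂ) * z j‖ :=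
          norm_blaschkeFactor_sub_one_le (hα j) (hz j) (hfar j hj)
      _ ≤ 2 * (1 - α j) / (3 * δ / 4) := by gcongr; linarith [hα j]
      _ = 8 / (3 * δ) * (1 - α j) := by field_simp; ring
  exact exists_tendsto_prod_Icc_ne_zero
    (fun j hj => blaschkeFactor_ne_zero (hα j) (hz j) (hfar j hj))
    (Summable.of_norm_bounded_eventually_nat (hsum.mul_left _)
      (eventually_atTop.mpr ⟨N, hbound⟩))

theorem stmt_0 (α : ℕ → ℝ) (hmono : StrictMono α) (hpos : ∀ j, 0 < α j)
    (hlim : Tendsto α atTop (𝓝 1)) (hsum : Summable (fun j => 1 - α j))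
    (z : ℕ → ℂ) (hz : ∀ j, ‖z j‖ ≤ 1) (δ : ℝ) (hδ : 0 < δ)
    (hzδ : ∀ j, δ < ‖z j - 1‖) (N : ℕ) (hN : ∀ j, N ≤ j → 1 - α j < δ / 4) :
    ∃ L : ℂ, L ≠ 0 ∧
      Tendsto (fun M => ∏ j ∈ Finset.Icc N M, ((α j : ℂ) - z j) / (1 - (α j : ℂ) * z j))
        atTop (𝓝 L) :=
  stmt_0_general α hmono hlim hsum z hz δ hδ hzδ N hN
end

section
/- Let (α_j) be an increasing sequence of positive reals converging to 1 with ∑_j (1 - α_j) < ∞, let z = (z_j) with |z_j| ≤ 1 and |z_j - 1| > δ for all j (for some δ > 0), let N be such that 1 - α_j < δ/4 for j ≥ N, and let (ℓ(k))_k be an increasing sequence of positive integers tending to ∞. Then lim_{k→∞} ∏_{j=N}^{ℓ(k)} (α_j - α_k z_j)/(1 - α_j α_k z_j) = ∏_{j=N}^∞ (α_j - z_j)/(1 - α_j z_j). -/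
open Filter Finset Topology

lemma aux_prod_diff {ι : Type*} (s : Finset ι) (a b : ι → ℂ)
    (ha : ∀ i ∈ s, ‖a i‖ ≤ 1) (hb : ∀ i ∈ s, ‖b i‖ ≤ 1) :
    ‖∏ i ∈ s, a i - ∏ i ∈ s, b i‖ ≤ ∑ i ∈ s, ‖a i - b i‖ := by
  induction s using Finset.cons_induction with
  | empty => simp
  | cons j s hj ih =>
    rw [Finset.prod_cons, Finset.prod_cons, Finset.sum_cons]
    have hbp : ‖∏ i ∈ s, b i‖ ≤ 1 := by
      rw [norm_prod]
      exact Finset.prod_le_one (fun i _ => norm_nonneg _)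
        (fun i hi => hb i (Finset.mem_cons_of_mem hi))
    have key : a j * ∏ i ∈ s, a i - b j * ∏ i ∈ s, b i
        = a j * (∏ i ∈ s, a i - ∏ i ∈ s, b i) + (a j - b j) * ∏ i ∈ s, b i := by ring
    rw [key]
    calc ‖a j * (∏ i ∈ s, a i - ∏ i ∈ s, b i) + (a j - b j) * ∏ i ∈ s, b i‖
        ≤ ‖a j * (∏ i ∈ s, a i - ∏ i ∈ s, b i)‖ + ‖(a j - b j) * ∏ i ∈ s, b i‖ :=
          norm_add_le _ _
      _ ≤ 1 * ‖∏ i ∈ s, a i - ∏ i ∈ s, b i‖ + ‖a j - b j‖ * 1 := by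
          rw [norm_mul, norm_mul]
          gcongr
          · exact ha j (Finset.mem_cons_self j s)
      _ ≤ ‖a j - b j‖ + ∑ i ∈ s, ‖a i - b i‖ := by
          rw [one_mul, mul_one]
          have := ih (fun i hi => ha i (Finset.mem_cons_of_mem hi))
            (fun i hi => hb i (Finset.mem_cons_of_mem hi))
          linarith

lemma aux_blaschke {a : ℝ} (ha0 : 0 ≤ a) (ha1 : a ≤ 1) {c : ℂ} (hc : ‖c‖ ≤ 1) :
    ‖(a : ℂ) - c‖ ≤ ‖1 - (a : ℂ) * c‖ := by
  have hsq : Complex.normSq ((a : ℂ) - c) ≤ Complex.normSq (1 - (a : ℂ) * c) := by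
    have hc2 : c.re ^ 2 + c.im ^ 2 ≤ 1 := by
      have : Complex.normSq c ≤ 1 := by
        have h2 : ‖c‖ ^ 2 ≤ 1 ^ 2 := pow_le_pow_left₀ (norm_nonneg c) hc 2
        simpa [Complex.sq_norm] using h2
      simpa [Complex.normSq_apply, sq] using this
    simp only [Complex.normSq_apply, Complex.sub_re, Complex.sub_im, Complex.one_re,
      Complex.one_im, Complex.mul_re, Complex.mul_im, Complex.ofReal_re, Complex.ofReal_im]
    have h1 : 0 ≤ 1 - a ^ 2 := by nlinarith
    have h2 : 0 ≤ 1 - (c.re ^ 2 + c.im ^ 2) := by linarith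
    nlinarith [mul_nonneg h1 h2]
  have := Real.sqrt_le_sqrt hsq
  simpa [Complex.norm_def] using this

theorem stmt_1 (α : ℕ → ℝ) (hmono : StrictMono α) (hpos : ∀ j, 0 < α j)
    (hlim : Tendsto α atTop (𝓝 1)) (hsum : Summable (fun j => 1 - α j))
    (z : ℕ → ℂ) (hz : ∀ j, ‖z j‖ ≤ 1) (δ : ℝ) (hδ : 0 < δ)
    (hzδ : ∀ j, δ < ‖z j - 1‖) (N : ℕ) (hN : ∀ j, N ≤ j → 1 - α j < δ / 4)
    (ℓ : ℕ → ℕ) (hℓ : StrictMono ℓ) (hℓ' : Tendsto ℓ atTop atTop) :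
    ∃ L : ℂ, L ≠ 0 ∧
      Tendsto (fun M => ∏ j ∈ Finset.Icc N M, ((α j : ℂ) - z j) / (1 - (α j : ℂ) * z j))
        atTop (𝓝 L) ∧
      Tendsto (fun k => ∏ j ∈ Finset.Icc N (ℓ k),
          ((α j : ℂ) - (α k : ℂ) * z j) / (1 - (α j : ℂ) * (α k : ℂ) * z j))
        atTop (𝓝 L) := by
  set f : ℕ → ℂ := fun j => ((α j : ℂ) - z j) / (1 - (α j : ℂ) * z j) with hf_def
  have hle : ∀ j, α j ≤ 1 := fun j => hmono.monotone.ge_of_tendsto hlim j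
  have hlt : ∀ j, α j < 1 := fun j => lt_of_lt_of_le (hmono (Nat.lt_succ_self j)) (hle (j + 1))
  -- denominator lower bound
  have key : ∀ (j : ℕ) (β : ℝ), β ≤ 1 → 1 - β ≤ δ / 2 → δ / 2 ≤ ‖1 - (β : ℂ) * z j‖ := by
    intro j β hβ1 hβ2
    have h0 : δ < ‖(1 : ℂ) - z j‖ := by rw [norm_sub_rev]; exact hzδ j
    have h1 : ‖(1 : ℂ) - z j‖ ≤ ‖1 - (β : ℂ) * z j‖ + ‖((1 - β : ℝ) : ℂ) * z j‖ := by
      have hid : (1 : ℂ) - z j = (1 - (β : ℂ) * z j) - ((1 - β : ℝ) : ℂ) * z j := by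
        push_cast; ring
      rw [hid]; exact norm_sub_le _ _
    have h2 : ‖((1 - β : ℝ) : ℂ) * z j‖ ≤ 1 - β := by
      rw [norm_mul, Complex.norm_real, Real.norm_eq_abs, abs_of_nonneg (by linarith)]
      calc (1 - β) * ‖z j‖ ≤ (1 - β) * 1 :=
            mul_le_mul_of_nonneg_left (hz j) (by linarith)
        _ = 1 - β := mul_one _
    linarith
  -- numerator nonvanishing for j ≥ N
  have hnum : ∀ j, N ≤ j → (δ / 2 : ℝ) ≤ ‖(α j : ℂ) - z j‖ := by
    intro j hj
    have h0 : δ < ‖z j - 1‖ := hzδ j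
    have h1 : ‖z j - 1‖ ≤ ‖(α j : ℂ) - z j‖ + ‖((α j - 1 : ℝ) : ℂ)‖ := by
      have hid : z j - 1 = -(((α j : ℂ) - z j)) + ((α j - 1 : ℝ) : ℂ) := by push_cast; ring
      rw [hid]
      exact (norm_add_le _ _).trans (by rw [norm_neg])
    have h2 : ‖((α j - 1 : ℝ) : ℂ)‖ ≤ δ / 4 := by
      rw [Complex.norm_real, Real.norm_eq_abs, abs_of_nonpos (by linarith [hlt j])]
      linarith [hN j hj]
    linarith
  have hden1 : ∀ j, N ≤ j → δ / 2 ≤ ‖1 - (α j : ℂ) * z j‖ := by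
    intro j hj
    exact key j (α j) (hle j) (by linarith [hN j hj])
  have hfne : ∀ i : ℕ, f (N + i) ≠ 0 := by
    intro i
    have hj : N ≤ N + i := Nat.le_add_right N i
    apply div_ne_zero
    · intro h
      have := hnum (N + i) hj
      rw [h, norm_zero] at this
      linarith
    · intro h
      have := hden1 (N + i) hj
      rw [h, norm_zero] at this
      linarith
  -- ‖f j - 1‖ bound
  have hfdiff : ∀ j, N ≤ j → ‖f j - 1‖ ≤ 4 / δ * (1 - α j) := by
    intro j hj
    have hden := hden1 j hj
    have hdne : (1 - (α j : ℂ) * z j) ≠ 0 := by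
      intro h; rw [h, norm_zero] at hden; linarith
    rw [hf_def]
    simp only
    rw [div_sub_one hdne, norm_div]
    have hnum2 : ‖(α j : ℂ) - z j - (1 - (α j : ℂ) * z j)‖ ≤ 2 * (1 - α j) := by
      have hid : (α j : ℂ) - z j - (1 - (α j : ℂ) * z j)
          = ((α j - 1 : ℝ) : ℂ) * (1 + z j) := by push_cast; ring
      rw [hid, norm_mul, Complex.norm_real, Real.norm_eq_abs, abs_of_nonpos (by linarith [hlt j])]
      have : ‖(1 : ℂ) + z j‖ ≤ 2 := by
        calc ‖(1 : ℂ) + z j‖ ≤ ‖(1 : ℂ)‖ + ‖z j‖ := norm_add_le _ _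
          _ ≤ 1 + 1 := by have := hz j; simp only [norm_one]; linarith
          _ = 2 := by norm_num
      calc -(α j - 1) * ‖1 + z j‖ ≤ (1 - α j) * 2 := by
            rw [neg_sub]; gcongr; linarith [hlt j]
        _ = 2 * (1 - α j) := by ring
    calc ‖(α j : ℂ) - z j - (1 - (α j : ℂ) * z j)‖ / ‖1 - (α j : ℂ) * z j‖
        ≤ 2 * (1 - α j) / (δ / 2) :=
          div_le_div₀ (by linarith [hlt j]) hnum2 (by linarith) hden
        _ = 4 / δ * (1 - α j) := by field_simp; ring
  -- summability of logs
  have hshift : Summable (fun i : ℕ => 1 - α (N + i)) :=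
    hsum.comp_injective (add_right_injective N)
  have hzero : Tendsto (fun i : ℕ => 1 - α (N + i)) atTop (𝓝 0) := by
    have h1 : Tendsto (fun k => 1 - α k) atTop (𝓝 0) := by
      have := hlim.const_sub (1 : ℝ); simpa using this
    exact h1.comp (tendsto_atTop_atTop_of_monotone (fun a b hab => by omega)
      (fun b => ⟨b, Nat.le_add_left b N⟩))
  have hlogsum : Summable (fun i : ℕ => Complex.log (f (N + i))) := by
    apply Summable.of_norm_bounded_eventually_nat
      (g := fun i => 3 / 2 * (4 / δ * (1 - α (N + i)))) ((hshift.mul_left (4 / δ)).mul_left (3 / 2))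
    have hev : ∀ᶠ i : ℕ in atTop, 4 / δ * (1 - α (N + i)) ≤ 1 / 2 := by
      have : Tendsto (fun i : ℕ => 4 / δ * (1 - α (N + i))) atTop (𝓝 0) := by
        simpa using hzero.const_mul (4 / δ)
      exact this.eventually_le_const (by norm_num)
    filter_upwards [hev] with i hi
    have hd := hfdiff (N + i) (Nat.le_add_right N i)
    have h12 : ‖f (N + i) - 1‖ ≤ 1 / 2 := hd.trans hi
    have := Complex.norm_log_one_add_half_le_self h12
    rw [add_sub_cancel] at this
    calc ‖Complex.log (f (N + i))‖ ≤ 3 / 2 * ‖f (N + i) - 1‖ := this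
      _ ≤ 3 / 2 * (4 / δ * (1 - α (N + i))) := by gcongr
  -- the limit value
  set S : ℂ := ∑' i : ℕ, Complex.log (f (N + i)) with hS_def
  have hP : HasProd (fun i : ℕ => f (N + i)) (Complex.exp S) := by
    have h := hlogsum.hasSum.cexp
    have heq : (Complex.exp ∘ fun i : ℕ => Complex.log (f (N + i)))
        = fun i : ℕ => f (N + i) := funext fun i => Complex.exp_log (hfne i)
    rwa [heq] at h
  have T1 : Tendsto (fun n => ∏ i ∈ Finset.range n, f (N + i)) atTop (𝓝 (Complex.exp S)) :=
    hP.tendsto_prod_nat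
  have heqIcc : ∀ M, ∏ j ∈ Finset.Icc N M, f j = ∏ i ∈ Finset.range (M + 1 - N), f (N + i) := by
    intro M
    rw [← Finset.Ico_add_one_right_eq_Icc, Finset.prod_Ico_eq_prod_range]
  have Tfirst : Tendsto (fun M => ∏ j ∈ Finset.Icc N M, f j) atTop (𝓝 (Complex.exp S)) := by
    have hcomp : Tendsto (fun M : ℕ => M + 1 - N) atTop atTop :=
      tendsto_atTop_atTop.mpr (fun b => ⟨b + N, fun a ha => by omega⟩)
    have := T1.comp hcomp
    exact this.congr (fun M => (heqIcc M).symm)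
  refine ⟨Complex.exp S, Complex.exp_ne_zero S, Tfirst, ?_⟩
  -- second limit
  set F : ℕ → ℕ → ℂ := fun k j =>
    ((α j : ℂ) - (α k : ℂ) * z j) / (1 - (α j : ℂ) * (α k : ℂ) * z j) with hF_def
  have A : Tendsto (fun k => ∏ j ∈ Finset.Icc N (ℓ k), f j) atTop (𝓝 (Complex.exp S)) :=
    Tfirst.comp hℓ'
  have hS' : Summable (fun j => 1 - α j) := hsum
  set S' : ℝ := ∑' j, (1 - α j) with hS'_def
  have hnn : ∀ j, 0 ≤ 1 - α j := fun j => by linarith [hlt j]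
  -- difference bound per term
  have hterm : ∀ k, N ≤ k → ∀ j, N ≤ j →
      ‖F k j - f j‖ ≤ 8 / δ ^ 2 * (1 - α k) * (1 - α j) := by
    intro k hk j hj
    have hβ : α j * α k ≤ 1 := by
      have := hle j; have := hle k; have := (hpos j).le; have := (hpos k).le
      nlinarith
    have hβ2 : 1 - α j * α k ≤ δ / 2 := by
      have h1 := hN j hj; have h2 := hN k hk
      have := (hpos j).le; have := hle j; have := hle k
      nlinarith
    have hdk : δ / 2 ≤ ‖1 - ((α j * α k : ℝ) : ℂ) * z j‖ := key j (α j * α k) hβ hβ2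
    have hdk' : δ / 2 ≤ ‖1 - (α j : ℂ) * (α k : ℂ) * z j‖ := by
      have : ((α j * α k : ℝ) : ℂ) = (α j : ℂ) * (α k : ℂ) := by push_cast; ring
      rwa [this] at hdk
    have hd1 := hden1 j hj
    have hy : (1 - (α j : ℂ) * (α k : ℂ) * z j) ≠ 0 := by
      intro h; rw [h, norm_zero] at hdk'; linarith
    have hv : (1 - (α j : ℂ) * z j) ≠ 0 := by
      intro h; rw [h, norm_zero] at hd1; linarith
    have hid : F k j - f j
        = (z j * ((1 - α k : ℝ) : ℂ) * ((1 - α j ^ 2 : ℝ) : ℂ))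
          / ((1 - (α j : ℂ) * (α k : ℂ) * z j) * (1 - (α j : ℂ) * z j)) := by
      rw [hF_def, hf_def]
      simp only
      rw [div_sub_div _ _ hy hv]
      congr 1
      push_cast
      ring
    rw [hid, norm_div, norm_mul, norm_mul, norm_mul, Complex.norm_real, Complex.norm_real, Real.norm_eq_abs, Real.norm_eq_abs]
    have hnum3 : ‖z j‖ * |1 - α k| * |1 - α j ^ 2| ≤ (1 - α k) * (2 * (1 - α j)) := by
      rw [abs_of_nonneg (by linarith [hlt k]), abs_of_nonneg (by nlinarith [hle j, (hpos j).le])]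
      have h1 : ‖z j‖ ≤ 1 := hz j
      have h2 : 1 - α j ^ 2 ≤ 2 * (1 - α j) := by nlinarith [hle j, (hpos j).le]
      have := hnn k; have := hnn j
      calc ‖z j‖ * (1 - α k) * (1 - α j ^ 2) ≤ 1 * (1 - α k) * (2 * (1 - α j)) := by
            have h3 : 0 ≤ 1 - α j ^ 2 := by nlinarith [hle j, (hpos j).le]
            gcongr
        _ = (1 - α k) * (2 * (1 - α j)) := by ring
    have hden3 : δ / 2 * (δ / 2) ≤ ‖1 - (α j : ℂ) * (α k : ℂ) * z j‖ * ‖1 - (α j : ℂ) * z j‖ :=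
      mul_le_mul hdk' hd1 (by linarith) (norm_nonneg _)
    calc ‖z j‖ * |1 - α k| * |1 - α j ^ 2|
          / (‖1 - (α j : ℂ) * (α k : ℂ) * z j‖ * ‖1 - (α j : ℂ) * z j‖)
        ≤ (1 - α k) * (2 * (1 - α j)) / (δ / 2 * (δ / 2)) :=
          div_le_div₀ (mul_nonneg (hnn k) (by linarith [hnn j])) hnum3
            (by positivity) hden3
      _ = 8 / δ ^ 2 * (1 - α k) * (1 - α j) := by field_simp; ring
  -- norm bounds ≤ 1
  have hFle : ∀ k j, N ≤ j → ‖F k j‖ ≤ 1 := by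
    intro k j hj
    have hc : ‖(α k : ℂ) * z j‖ ≤ 1 := by
      rw [norm_mul, Complex.norm_real, Real.norm_eq_abs, abs_of_pos (hpos k)]
      calc α k * ‖z j‖ ≤ 1 * 1 := by
            have := (hpos k).le
            gcongr
            · exact hle k
            · exact hz j
        _ = 1 := by norm_num
    have hb := aux_blaschke (hpos j).le (hle j) hc
    rw [hF_def]
    simp only
    rw [norm_div]
    rcases eq_or_ne (1 - (α j : ℂ) * (α k : ℂ) * z j) 0 with h | h
    · rw [h, norm_zero, div_zero]; norm_num
    · rw [div_le_one (norm_pos_iff.mpr h)]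
      calc ‖(α j : ℂ) - (α k : ℂ) * z j‖ ≤ ‖1 - (α j : ℂ) * ((α k : ℂ) * z j)‖ := hb
        _ = ‖1 - (α j : ℂ) * (α k : ℂ) * z j‖ := by rw [mul_assoc]
  have hfle : ∀ j, N ≤ j → ‖f j‖ ≤ 1 := by
    intro j hj
    have hb := aux_blaschke (hpos j).le (hle j) (hz j)
    rw [hf_def]
    simp only
    rw [norm_div]
    have hd := hden1 j hj
    have hne : (1 - (α j : ℂ) * z j) ≠ 0 := by
      intro h; rw [h, norm_zero] at hd; linarith
    rw [div_le_one (norm_pos_iff.mpr hne)]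
    exact hb
  -- the difference tends to 0
  have hD : Tendsto (fun k => ∏ j ∈ Finset.Icc N (ℓ k), F k j
      - ∏ j ∈ Finset.Icc N (ℓ k), f j) atTop (𝓝 0) := by
    apply squeeze_zero_norm' (a := fun k => 8 / δ ^ 2 * S' * (1 - α k))
    · filter_upwards [eventually_ge_atTop N] with k hk
      calc ‖∏ j ∈ Finset.Icc N (ℓ k), F k j - ∏ j ∈ Finset.Icc N (ℓ k), f j‖
          ≤ ∑ j ∈ Finset.Icc N (ℓ k), ‖F k j - f j‖ :=
            aux_prod_diff _ _ _
              (fun j hjm => hFle k j (Finset.mem_Icc.mp hjm).1)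
              (fun j hjm => hfle j (Finset.mem_Icc.mp hjm).1)
        _ ≤ ∑ j ∈ Finset.Icc N (ℓ k), 8 / δ ^ 2 * (1 - α k) * (1 - α j) :=
            Finset.sum_le_sum (fun j hjm => hterm k hk j (Finset.mem_Icc.mp hjm).1)
        _ = 8 / δ ^ 2 * (1 - α k) * ∑ j ∈ Finset.Icc N (ℓ k), (1 - α j) := by
            rw [Finset.mul_sum]
        _ ≤ 8 / δ ^ 2 * (1 - α k) * S' := by
            gcongr
            · have := hnn k; positivity
            · exact Summable.sum_le_tsum _ (fun j _ => hnn j) hsum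
        _ = 8 / δ ^ 2 * S' * (1 - α k) := by ring
    · have h1 : Tendsto (fun k => 1 - α k) atTop (𝓝 0) := by
        have := hlim.const_sub (1 : ℝ); simpa using this
      simpa using h1.const_mul (8 / δ ^ 2 * S')
  have hfinal := A.add hD
  rw [add_zero] at hfinal
  exact hfinal.congr (fun k => by ring)
end

section
/- Let f, h be complex numbers with |f| ≤ 1 and |h| ≤ 1, let g = (f + h)/2, and let 0 < k < 1/8. Then |g + k(f - h)²| ≤ 1. -/
/-! By the parallelogram law, `‖f - h‖² ≤ 4 (1 - ‖g‖²)` for `g = (f + h) / 2`, so the triangle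
inequality bounds the norm by `‖g‖ + 4k (1 - ‖g‖²)`, and
`1 - ‖g‖ - 4k (1 - ‖g‖²) = (1 - ‖g‖) (1 - 4k (1 + ‖g‖)) ≥ (1 - ‖g‖) (1 - 8k) ≥ 0`. -/

lemma norm_sub_sq_le_four_sub_norm_add_sq {E : Type*} [NormedAddCommGroup E]
    [InnerProductSpace ℝ E] {f h : E} (hf : ‖f‖ ≤ 1) (hh : ‖h‖ ≤ 1) :
    ‖f - h‖ ^ 2 ≤ 4 - ‖f + h‖ ^ 2 := by
  have hpar := parallelogram_law_with_norm ℝ f h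
  nlinarith [norm_nonneg f, norm_nonneg h]

lemma add_mul_one_sub_sq_le_one {t k : ℝ} (ht₀ : 0 ≤ t) (ht₁ : t ≤ 1) (hk : k ≤ 1 / 8) :
    t + 4 * k * (1 - t ^ 2) ≤ 1 := by
  have hfactor : 0 ≤ (1 - t) * (1 - 4 * k * (1 + t)) :=
    mul_nonneg (by linarith) (by nlinarith)
  nlinarith

theorem stmt_7 (f h : ℂ) (hf : ‖f‖ ≤ 1) (hh : ‖h‖ ≤ 1) (k : ℝ) (hk : 0 < k) (hk' : k < 1/8) :
    ‖(f + h) / 2 + (k : ℂ) * (f - h) ^ 2‖ ≤ 1 := by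
  have hg : ‖(f + h) / 2‖ = ‖f + h‖ / 2 := by simp
  have hg₁ : ‖(f + h) / 2‖ ≤ 1 := by
    rw [hg]
    linarith [norm_add_le f h]
  have hsub : ‖f - h‖ ^ 2 ≤ 4 * (1 - ‖(f + h) / 2‖ ^ 2) := by
    rw [hg]
    linarith [norm_sub_sq_le_four_sub_norm_add_sq (E := ℂ) hf hh]
  calc ‖(f + h) / 2 + (k : ℂ) * (f - h) ^ 2‖
      ≤ ‖(f + h) / 2‖ + k * ‖f - h‖ ^ 2 := by
        grw [norm_add_le]
        simp [abs_of_pos hk]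
    _ ≤ ‖(f + h) / 2‖ + 4 * k * (1 - ‖(f + h) / 2‖ ^ 2) := by
        linarith [mul_le_mul_of_nonneg_left hsub hk.le]
    _ ≤ 1 := add_mul_one_sub_sq_le_one (norm_nonneg _) hg₁ hk'.le
end

section
/- Let f, h be complex numbers with |f| ≤ 1, |h| ≤ 1, let g = (f+h)/2, let 0 < k < 1/8, and set j = g + k(f-h)². If g ≠ j (i.e. f ≠ h), then |(g - j)/(1 - conj(g)·j)| ≤ k/(1/4 - k) < 1. -/
/-!
With `g` the midpoint of `f` and `h`, the two points `g` and `j` differ by `k (f - h)²`, and the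
parallelogram law gives `|f - h|² ≤ 4 (1 - |g|²)`. Hence the denominator `1 - conj(g) j`, which is
`1 - |g|²` up to an error of size at most `k |f - h|²`, is at least `(1/4 - k) |f - h|²`, while the
numerator is exactly `k |f - h|²`.
-/

open ComplexConjugate

section RCLike

variable {𝕜 : Type*} [RCLike 𝕜]

theorem RCLike.norm_sub_sq_le_four_mul_one_sub_norm_midpoint_sq {f h : 𝕜} (hf : ‖f‖ ≤ 1)
    (hh : ‖h‖ ≤ 1) : ‖f - h‖ ^ 2 ≤ 4 * (1 - ‖(f + h) / 2‖ ^ 2) := by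
  have hpar := parallelogram_law_with_norm 𝕜 f h
  have hmid : ‖(f + h) / 2‖ = ‖f + h‖ / 2 := by simp [norm_div]
  rw [hmid]
  nlinarith [norm_nonneg f, norm_nonneg h]

theorem RCLike.one_sub_norm_sq_sub_le_norm_one_sub_conj_mul_add (g w : 𝕜) :
    1 - ‖g‖ ^ 2 - ‖g‖ * ‖w‖ ≤ ‖1 - conj g * (g + w)‖ := by
  have hsplit : 1 - conj g * (g + w) = ((1 - ‖g‖ ^ 2 : ℝ) : 𝕜) - conj g * w := by
    rw [mul_add, RCLike.conj_mul]; push_cast; ring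
  calc 1 - ‖g‖ ^ 2 - ‖g‖ * ‖w‖
      ≤ ‖((1 - ‖g‖ ^ 2 : ℝ) : 𝕜)‖ - ‖conj g * w‖ := by
        rw [RCLike.norm_ofReal, norm_mul, RCLike.norm_conj]
        linarith [le_abs_self (1 - ‖g‖ ^ 2)]
    _ ≤ ‖1 - conj g * (g + w)‖ := hsplit ▸ norm_sub_norm_le _ _

end RCLike

theorem stmt_9 (f h : ℂ) (hf : ‖f‖ ≤ 1) (hh : ‖h‖ ≤ 1) (k : ℝ) (hk : 0 < k) (hk' : k < 1/8)
    (g j : ℂ) (hg : g = (f + h) / 2) (hj : j = g + (k : ℂ) * (f - h) ^ 2) (hne : f ≠ h) :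
    ‖(g - j) / (1 - (starRingEnd ℂ) g * j)‖ ≤ k / (1/4 - k) ∧ k / (1/4 - k) < 1 := by
  have hk4 : 0 < 1/4 - k := by linarith
  have hd : 0 < ‖f - h‖ ^ 2 := by positivity [sub_ne_zero.mpr hne]
  have hpar : ‖f - h‖ ^ 2 ≤ 4 * (1 - ‖g‖ ^ 2) :=
    hg ▸ RCLike.norm_sub_sq_le_four_mul_one_sub_norm_midpoint_sq hf hh
  have hg1 : ‖g‖ ≤ 1 :=
    (pow_le_one_iff_of_nonneg (norm_nonneg g) two_ne_zero).mp (by nlinarith)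
  have hw : ‖(k : ℂ) * (f - h) ^ 2‖ = k * ‖f - h‖ ^ 2 := by
    rw [norm_mul, norm_pow, Complex.norm_real, Real.norm_of_nonneg hk.le]
  have hnum : ‖g - j‖ = k * ‖f - h‖ ^ 2 := by
    rw [hj, sub_add_cancel_left, norm_neg, hw]
  have hden : (1/4 - k) * ‖f - h‖ ^ 2 ≤ ‖1 - conj g * j‖ := by
    have := hj ▸ RCLike.one_sub_norm_sq_sub_le_norm_one_sub_conj_mul_add g ((k : ℂ) * (f - h) ^ 2)
    rw [hw] at this
    nlinarith [mul_le_of_le_one_left (by positivity : 0 ≤ k * ‖f - h‖ ^ 2) hg1]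
  refine ⟨?_, (div_lt_one hk4).mpr (by linarith)⟩
  calc ‖(g - j) / (1 - conj g * j)‖
      ≤ k * ‖f - h‖ ^ 2 / ((1/4 - k) * ‖f - h‖ ^ 2) := by
        rw [norm_div, hnum]
        exact div_le_div_of_nonneg_left (by positivity) (by positivity) hden
    _ = k / (1/4 - k) := mul_div_mul_right _ _ hd.ne'
end

section
/- Let g ∈ 𝓗^∞(B, ℓ_∞) be a bounded holomorphic function on the open unit ball B of a complex Banach space with values in ℓ_∞, with ‖g(x)‖ ≤ 1 for all x ∈ B, writing g = (g_n)_n with each g_n : B → ℂ holomorphic. Then g = (g_n) is an extreme point of the closed unit ball of 𝓗^∞(B, ℓ_∞) if and only if g_n is an extreme point of the closed unit ball of 𝓗^∞(B) for every n. -/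
/-! Restricting a decomposition of `g` to the `n`-th coordinate gives one direction. For the other,
a decomposition `g n = (f + h) / 2` in the scalar ball lifts to the decomposition of `g` obtained by
replacing its `n`-th coordinate by `f` and by `h`, so `f = h` on the ball. -/

open Metric Function

theorem forall_update_of_forall {ι β : Type*} [DecidableEq ι] (p : β → Prop) {g : ι → β}
    (hg : ∀ k, p (g k)) (n : ι) {f : β} (hf : p f) : ∀ k, p (update g n f k) :=
  (forall_update_iff g fun _ b => p b).2 ⟨hf, fun k _ => hg k⟩

theorem stmt_18 {E : Type*} [NormedAddCommGroup E] [NormedSpace ℂ E]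
    (g : ℕ → E → ℂ) (hg : ∀ n, DifferentiableOn ℂ (g n) (ball (0:E) 1))
    (hgb : ∀ x ∈ ball (0:E) 1, ∀ n, ‖g n x‖ ≤ 1) :
    -- `g` is an extreme point of the closed unit ball of `𝓗^∞(B, ℓ_∞)`
    (∀ f h : ℕ → E → ℂ,
        (∀ n, DifferentiableOn ℂ (f n) (ball (0:E) 1)) →
        (∀ x ∈ ball (0:E) 1, ∀ n, ‖f n x‖ ≤ 1) →
        (∀ n, DifferentiableOn ℂ (h n) (ball (0:E) 1)) →
        (∀ x ∈ ball (0:E) 1, ∀ n, ‖h n x‖ ≤ 1) →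
        (∀ n, ∀ x ∈ ball (0:E) 1, g n x = (f n x + h n x) / 2) →
        (∀ n, ∀ x ∈ ball (0:E) 1, f n x = h n x))
    ↔
    -- each `g n` is an extreme point of the closed unit ball of `𝓗^∞(B)`
    (∀ n, ∀ f h : E → ℂ,
        DifferentiableOn ℂ f (ball (0:E) 1) → (∀ x ∈ ball (0:E) 1, ‖f x‖ ≤ 1) →
        DifferentiableOn ℂ h (ball (0:E) 1) → (∀ x ∈ ball (0:E) 1, ‖h x‖ ≤ 1) →
        (∀ x ∈ ball (0:E) 1, g n x = (f x + h x) / 2) →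
        ∀ x ∈ ball (0:E) 1, f x = h x) := by
  refine ⟨fun H n f h hf hfb hh hhb hmid => ?_, fun H f h hf hfb hh hhb hmid n =>
    H n (f n) (h n) (hf n) (fun x hx => hfb x hx n) (hh n) (fun x hx => hhb x hx n) (hmid n)⟩
  have hgb' : ∀ k, ∀ x ∈ ball (0:E) 1, ‖g k x‖ ≤ 1 := fun k x hx => hgb x hx k
  have hfb' := forall_update_of_forall (fun u : E → ℂ => ∀ x ∈ ball (0:E) 1, ‖u x‖ ≤ 1) hgb' n hfb
  have hhb' := forall_update_of_forall (fun u : E → ℂ => ∀ x ∈ ball (0:E) 1, ‖u x‖ ≤ 1) hgb' n hhb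
  have hmid' : ∀ k, ∀ x ∈ ball (0:E) 1, g k x = (update g n f k x + update g n h k x) / 2 := by
    intro k x hx
    rcases eq_or_ne k n with rfl | hk
    · simpa only [update_self] using hmid x hx
    · rw [update_of_ne hk, update_of_ne hk]
      ring
  simpa only [update_self] using
    H (update g n f) (update g n h) (forall_update_of_forall (DifferentiableOn ℂ · _) hg n hf)
      (fun x hx k => hfb' k x hx) (forall_update_of_forall (DifferentiableOn ℂ · _) hg n hh)
      (fun x hx k => hhb' k x hx) hmid' n
end

section
/- Let B be the open unit ball of c₀ and let g : B → ℓ_∞ be holomorphic with ‖g(x)‖ ≤ 1 for all x ∈ B. If there exists x₀ ∈ B with ‖g(x₀)‖ = 1, then ‖g(x)‖ = 1 for all x ∈ B; consequently either g(B) is contained in the open unit ball of ℓ_∞, or g(B) is contained in the unit sphere of ℓ_∞. -/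
open Metric ZeroAtInfty

/-- `c₀`: complex sequences tending to zero, with the sup norm. -/
abbrev CZeroSeq : Type := C₀(ℕ, ℂ)

/-- `ℓ_∞`: bounded complex sequences with the sup norm. -/
abbrev LinftySeq : Type := lp (fun _ : ℕ => ℂ) ⊤

section MaximumModulus

variable {E F : Type*} [NormedAddCommGroup E] [NormedSpace ℂ E]
  [NormedAddCommGroup F] [NormedSpace ℂ F] {f : E → F} {U : Set E} {r : ℝ}

theorem Complex.norm_eq_on_of_norm_le_of_norm_eq (hc : IsPreconnected U) (ho : IsOpen U)
    (hd : DifferentiableOn ℂ f U) (hle : ∀ x ∈ U, ‖f x‖ ≤ r) {x₀ : E} (hx₀ : x₀ ∈ U)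
    (hr : ‖f x₀‖ = r) : ∀ x ∈ U, ‖f x‖ = r := by
  have hmax : IsMaxOn (norm ∘ f) U x₀ := fun y hy => by
    simpa only [Set.mem_ofPred_eq, Function.comp_apply, hr] using hle y hy
  intro x hx
  simpa only [Function.comp_apply, Function.const_apply, hr] using
    Complex.norm_eqOn_of_isPreconnected_of_isMaxOn hc ho hd hx₀ hmax hx

theorem Complex.norm_lt_on_or_norm_eq_on (hc : IsPreconnected U) (ho : IsOpen U)
    (hd : DifferentiableOn ℂ f U) (hle : ∀ x ∈ U, ‖f x‖ ≤ r) :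
    (∀ x ∈ U, ‖f x‖ < r) ∨ ∀ x ∈ U, ‖f x‖ = r := by
  by_cases h : ∃ x₀ ∈ U, ‖f x₀‖ = r
  · obtain ⟨x₀, hx₀, hr⟩ := h
    exact Or.inr (Complex.norm_eq_on_of_norm_le_of_norm_eq hc ho hd hle hx₀ hr)
  · push Not at h
    exact Or.inl fun x hx => (hle x hx).lt_of_ne (h x hx)

end MaximumModulus

theorem stmt_19 (g : CZeroSeq → LinftySeq)
    (hg : DifferentiableOn ℂ g (ball (0 : CZeroSeq) 1))
    (hgb : ∀ x ∈ ball (0 : CZeroSeq) 1, ‖g x‖ ≤ 1) :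
    ((∃ x₀ ∈ ball (0 : CZeroSeq) 1, ‖g x₀‖ = 1) →
        ∀ x ∈ ball (0 : CZeroSeq) 1, ‖g x‖ = 1) ∧
    ((∀ x ∈ ball (0 : CZeroSeq) 1, ‖g x‖ < 1) ∨
      (∀ x ∈ ball (0 : CZeroSeq) 1, ‖g x‖ = 1)) := by
  have hB : IsPreconnected (ball (0 : CZeroSeq) 1) := (convex_ball 0 1).isPreconnected
  refine ⟨fun ⟨x₀, hx₀, hx₀_norm⟩ => ?_, Complex.norm_lt_on_or_norm_eq_on hB isOpen_ball hg hgb⟩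
  exact Complex.norm_eq_on_of_norm_le_of_norm_eq hB isOpen_ball hg hgb hx₀ hx₀_norm
end
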